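/- arXiv:2505.07810 — 4 statements merged into one kernel-verified Lean document; each statement's English description precedes it below -/
import Mathlib

section
/- Let a, b, c, d be integers such that c and c + d are nonzero and have the same sign, and suppose ⌊a/c⌋ = ⌊(a+b)/(c+d)⌋ = b₀ for some integer b₀. Then for every real number x with x ≥ 1, one has ⌊(ax+b)/(cx+d)⌋ = b₀. -/
open Set

theorem Int.floor_eq_of_mem_uIcc {R : Type*} [Ring R] [LinearOrder R] [FloorRing R]
    {u v y : R} {n : ℤ} (hu : ⌊u⌋ = n) (hv : ⌊v⌋ = n) (hy : y ∈ uIcc u v) : ⌊y⌋ = n := by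
  apply le_antisymm
  · calc ⌊y⌋ ≤ ⌊max u v⌋ := Int.floor_mono hy.2
      _ = n := by rcases max_choice u v with h | h <;> rw [h] <;> assumption
  · calc n = ⌊min u v⌋ := by rcases min_choice u v with h | h <;> rw [h] <;> symm <;> assumption
      _ ≤ ⌊y⌋ := Int.floor_mono hy.1

/-- The value at `x` is the point of the segment from `a / c` to `(a + b) / (c + d)` with
parameter `(c + d) / (c * x + d) ∈ (0, 1]`. -/
theorem div_mem_uIcc_div_of_one_le {K : Type*} [Field K] [LinearOrder K] [IsStrictOrderedRing K]
    {a b c d x : K} (hsign : 0 < c * (c + d)) (hx : 1 ≤ x) :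
    (a * x + b) / (c * x + d) ∈ uIcc (a / c) ((a + b) / (c + d)) := by
  have hc : c ≠ 0 := by rintro rfl; simp at hsign
  have hcd : c + d ≠ 0 := by rintro h; simp [h] at hsign
  -- `(c + d) (c x + d) = (c + d)² + c (c + d) (x - 1)`
  have hprod : (c + d) ^ 2 ≤ (c + d) * (c * x + d) := by nlinarith
  have hpos : 0 < (c + d) * (c * x + d) := lt_of_lt_of_le (by positivity) hprod
  have hcxd : c * x + d ≠ 0 := by rintro h; simp [h] at hpos
  have ht : (c + d) / (c * x + d) ∈ Icc (0 : K) 1 := by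
    rw [← mul_div_mul_left (c + d) (c * x + d) hcd, ← sq]
    exact ⟨div_nonneg (sq_nonneg _) hpos.le, div_le_one_of_le₀ hprod hpos.le⟩
  rw [← segment_eq_uIcc]
  convert lineMap_mem_segment K (a / c) ((a + b) / (c + d)) ht using 1
  rw [AffineMap.lineMap_apply_ring', div_sub_div _ _ hcd hc, div_mul_div_comm,
    div_add_div _ _ (by simp [*]) hc, div_eq_div_iff hcxd (by simp [*])]
  ring

theorem stmt_1_general (a b c d b₀ : ℤ) (hsign : 0 < c * (c + d))
    (h1 : ⌊(a : ℝ) / c⌋ = b₀) (h2 : ⌊((a : ℝ) + b) / ((c : ℝ) + d)⌋ = b₀) :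
    ∀ x : ℝ, 1 ≤ x → ⌊((a : ℝ) * x + b) / ((c : ℝ) * x + d)⌋ = b₀ := by
  intro x hx
  exact Int.floor_eq_of_mem_uIcc h1 h2 (div_mem_uIcc_div_of_one_le (by exact_mod_cast hsign) hx)

/-- If `c` and `c + d` are nonzero integers with the same sign and
`⌊a/c⌋ = ⌊(a+b)/(c+d)⌋ = b₀`, then for every real `x ≥ 1` one has
`⌊(a*x+b)/(c*x+d)⌋ = b₀`. -/
theorem stmt_1 (a b c d b₀ : ℤ) (hc : c ≠ 0) (hcd : c + d ≠ 0) (hsign : 0 < c * (c + d))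
    (h1 : ⌊(a : ℝ) / c⌋ = b₀) (h2 : ⌊((a : ℝ) + b) / ((c : ℝ) + d)⌋ = b₀) :
    ∀ x : ℝ, 1 ≤ x → ⌊((a : ℝ) * x + b) / ((c : ℝ) * x + d)⌋ = b₀ :=
  stmt_1_general a b c d b₀ hsign h1 h2
end

section
/- Let a, b, c, d, e, f, g, h be integers such that e, e+f, e+g and e+f+g+h are nonzero and all have the same sign. Then for all real numbers x, y with x ≥ 1 and y ≥ 1, one has exy + fx + gy + h ≠ 0 and the value (axy+bx+cy+d)/(exy+fx+gy+h) lies between the minimum and the maximum of the four numbers a/e, (a+b)/(e+f), (a+c)/(e+g), (a+b+c+d)/(e+f+g+h). -/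
/-!
Writing `x = 1 + u`, `y = 1 + v` with `u, v ≥ 0`, numerator and denominator become
`u v (a, e) + u (a + b, e + f) + v (a + c, e + g) + (a + b + c + d, e + f + g + h)`, so the
fraction is a mediant of the four corner values `a / e, …` with nonnegative weights. When the
corner denominators share a sign, such a mediant lies between the least and the greatest of them.
-/

open Finset

section WeightedMediant

variable {K ι : Type*} [Field K] [LinearOrder K] [IsStrictOrderedRing K]
  {s : Finset ι} {w p q : ι → K}

theorem le_sum_mul_div_sum_mul {m : K} (hw : ∀ i ∈ s, 0 ≤ w i) (hq : ∀ i ∈ s, 0 < q i)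
    (hden : 0 < ∑ i ∈ s, w i * q i) (hm : ∀ i ∈ s, m ≤ p i / q i) :
    m ≤ (∑ i ∈ s, w i * p i) / ∑ i ∈ s, w i * q i := by
  rw [le_div_iff₀ hden, mul_sum]
  refine sum_le_sum fun i hi => ?_
  rw [mul_left_comm]
  exact mul_le_mul_of_nonneg_left ((le_div_iff₀ (hq i hi)).1 (hm i hi)) (hw i hi)

theorem sum_mul_div_sum_mul_le {M : K} (hw : ∀ i ∈ s, 0 ≤ w i) (hq : ∀ i ∈ s, 0 < q i)
    (hden : 0 < ∑ i ∈ s, w i * q i) (hM : ∀ i ∈ s, p i / q i ≤ M) :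
    (∑ i ∈ s, w i * p i) / ∑ i ∈ s, w i * q i ≤ M := by
  rw [div_le_iff₀ hden, mul_sum]
  refine sum_le_sum fun i hi => ?_
  rw [mul_left_comm]
  exact mul_le_mul_of_nonneg_left ((div_le_iff₀ (hq i hi)).1 (hM i hi)) (hw i hi)

end WeightedMediant

theorem bilinear_eq_sum_corners {R : Type*} [CommRing R] (A B C D x y : R) :
    A * x * y + B * x + C * y + D =
      ∑ i, ![(x - 1) * (y - 1), x - 1, y - 1, 1] i * ![A, A + B, A + C, A + B + C + D] i := by
  simp only [Fin.sum_univ_four, Matrix.cons_val]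
  ring

section BilinearFraction

variable {K : Type*} [Field K] [LinearOrder K] [IsStrictOrderedRing K]

theorem bilinear_frac_bounds_of_pos (A B C D E F G H x y : K)
    (hE : 0 < E) (hEF : 0 < E + F) (hEG : 0 < E + G) (hS : 0 < E + F + G + H)
    (hx : 1 ≤ x) (hy : 1 ≤ y) :
    0 < E * x * y + F * x + G * y + H ∧
    min (min (A / E) ((A + B) / (E + F)))
        (min ((A + C) / (E + G)) ((A + B + C + D) / (E + F + G + H)))
      ≤ (A * x * y + B * x + C * y + D) / (E * x * y + F * x + G * y + H) ∧
    (A * x * y + B * x + C * y + D) / (E * x * y + F * x + G * y + H)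
      ≤ max (max (A / E) ((A + B) / (E + F)))
            (max ((A + C) / (E + G)) ((A + B + C + D) / (E + F + G + H))) := by
  have hw : ∀ i ∈ univ, 0 ≤ ![(x - 1) * (y - 1), x - 1, y - 1, 1] i := by
    intro i _; fin_cases i <;> simp [hx, hy, mul_nonneg]
  have hq : ∀ i ∈ univ, 0 < ![E, E + F, E + G, E + F + G + H] i := by
    intro i _; fin_cases i <;> simpa
  have hden := sum_pos' (fun i hi => mul_nonneg (hw i hi) (hq i hi).le)
    ⟨3, mem_univ _, by simpa using hS⟩
  rw [bilinear_eq_sum_corners A, bilinear_eq_sum_corners E]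
  refine ⟨hden, le_sum_mul_div_sum_mul hw hq hden ?_, sum_mul_div_sum_mul_le hw hq hden ?_⟩
  all_goals
    intro i _
    fin_cases i <;> simp

theorem bilinear_frac_bounds_of_neg (A B C D E F G H x y : K)
    (hE : E < 0) (hEF : E + F < 0) (hEG : E + G < 0) (hS : E + F + G + H < 0)
    (hx : 1 ≤ x) (hy : 1 ≤ y) :
    E * x * y + F * x + G * y + H < 0 ∧
    min (min (A / E) ((A + B) / (E + F)))
        (min ((A + C) / (E + G)) ((A + B + C + D) / (E + F + G + H)))
      ≤ (A * x * y + B * x + C * y + D) / (E * x * y + F * x + G * y + H) ∧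
    (A * x * y + B * x + C * y + D) / (E * x * y + F * x + G * y + H)
      ≤ max (max (A / E) ((A + B) / (E + F)))
            (max ((A + C) / (E + G)) ((A + B + C + D) / (E + F + G + H))) := by
  have := bilinear_frac_bounds_of_pos (-A) (-B) (-C) (-D) (-E) (-F) (-G) (-H) x y
    (by linarith) (by linarith) (by linarith) (by linarith) hx hy
  simpa only [neg_mul, ← neg_add, neg_div_neg_eq, neg_pos] using this

end BilinearFraction

/-- If `e`, `e+f`, `e+g`, `e+f+g+h` are nonzero integers all of the same sign
(i.e. all positive or all negative), then for all reals `x, y ≥ 1` the denominator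
`e*x*y + f*x + g*y + h` is nonzero, and the bilinear fractional transform lies between the
minimum and the maximum of `a/e`, `(a+b)/(e+f)`, `(a+c)/(e+g)`, `(a+b+c+d)/(e+f+g+h)`. -/
theorem stmt_2 (a b c d e f g h : ℤ)
    (hsign : (0 < e ∧ 0 < e + f ∧ 0 < e + g ∧ 0 < e + f + g + h) ∨
             (e < 0 ∧ e + f < 0 ∧ e + g < 0 ∧ e + f + g + h < 0)) :
    ∀ x y : ℝ, 1 ≤ x → 1 ≤ y →
      (e : ℝ) * x * y + f * x + g * y + h ≠ 0 ∧
      min (min ((a : ℝ) / e) (((a : ℝ) + b) / ((e : ℝ) + f)))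
          (min (((a : ℝ) + c) / ((e : ℝ) + g)) (((a : ℝ) + b + c + d) / ((e : ℝ) + f + g + h)))
        ≤ ((a : ℝ) * x * y + b * x + c * y + d) / ((e : ℝ) * x * y + f * x + g * y + h) ∧
      ((a : ℝ) * x * y + b * x + c * y + d) / ((e : ℝ) * x * y + f * x + g * y + h)
        ≤ max (max ((a : ℝ) / e) (((a : ℝ) + b) / ((e : ℝ) + f)))
              (max (((a : ℝ) + c) / ((e : ℝ) + g))
                   (((a : ℝ) + b + c + d) / ((e : ℝ) + f + g + h))) := by
  intro x y hx hy
  rcases hsign with ⟨hE, hEF, hEG, hS⟩ | ⟨hE, hEF, hEG, hS⟩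
  · obtain ⟨hden, hbounds⟩ := bilinear_frac_bounds_of_pos (a : ℝ) b c d e f g h x y
      (by exact_mod_cast hE) (by exact_mod_cast hEF) (by exact_mod_cast hEG)
      (by exact_mod_cast hS) hx hy
    exact ⟨hden.ne', hbounds⟩
  · obtain ⟨hden, hbounds⟩ := bilinear_frac_bounds_of_neg (a : ℝ) b c d e f g h x y
      (by exact_mod_cast hE) (by exact_mod_cast hEF) (by exact_mod_cast hEG)
      (by exact_mod_cast hS) hx hy
    exact ⟨hden.ne, hbounds⟩
end

section
/- Let m ≥ 1, let x⁽¹⁾, …, x⁽ᵐ⁾ be real numbers, and for k = 1, …, m+1 let (Aₙ⁽ᵏ⁾)ₙ≥0 be sequences of integers with Aₙ⁽ᵐ⁺¹⁾ > 0 for all n and limₙ Aₙ⁽ᵏ⁾/Aₙ⁽ᵐ⁺¹⁾ = x⁽ᵏ⁾ for each k ∈ {1, …, m}. Let C = [cₖ⁽ⁱ⁾] (1 ≤ i, k ≤ m+1) be an integer matrix, set L⁽ⁱ⁾ = Σ_{k=1}^{m} cₖ⁽ⁱ⁾x⁽ᵏ⁾ + c_{m+1}⁽ⁱ⁾, and assume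 that (L⁽¹⁾, …, L⁽ᵐ⁺¹⁾) is linearly independent over ℚ. For n ≥ m and 1 ≤ j ≤ m+1 set Sⱼ(n) = Σ_{k=1}^{m+1} cₖ⁽ᵐ⁺¹⁾A_{n+1−j}⁽ᵏ⁾ and T_{i,j}(n) = Σ_{k=1}^{m+1} cₖ⁽ⁱ⁾A_{n+1−j}⁽ᵏ⁾. Then there exists N ≥ m such that for all n ≥ N: the numbers S₁(n), …, S_{m+1}(n) are all nonzero and all have the same sign, and for each i ∈ {1, …, m} the floors ⌊T_{i,j}(n)/Sⱼ(n)⌋ are equal for all j ∈ {1, …, m+1}, their common value being ⌊L⁽ⁱ⁾/L⁽ᵐ⁺¹⁾⌋. -/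
/-!
After division by the denominator `A (n - j) (Fin.last m)`, the `i`-th row sum
`∑ₖ C i k * A (n - j) k` tends to `L i`. Hence `S n j` eventually has the sign of
`L (Fin.last m) ≠ 0`, and `T n i j / S n j → L i / L (Fin.last m)`. Linear independence over `ℚ`
makes this limit a non-integer, and the floor function is locally constant away from the integers.
-/

open Filter Topology

section

variable {α : Type*} {l : Filter α}

theorem tendsto_sum_mul_div_last {m : ℕ} {A : α → Fin (m + 1) → ℝ} {x : Fin m → ℝ}
    (hA : ∀ a, A a (Fin.last m) ≠ 0)
    (hlim : ∀ k : Fin m, Tendsto (fun a => A a k.castSucc / A a (Fin.last m)) l (𝓝 (x k)))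
    (c : Fin (m + 1) → ℝ) :
    Tendsto (fun a => (∑ k, c k * A a k) / A a (Fin.last m)) l
      (𝓝 (∑ k : Fin m, c k.castSucc * x k + c (Fin.last m))) := by
  have hsplit : ∀ a, (∑ k, c k * A a k) / A a (Fin.last m) =
      ∑ k : Fin m, c k.castSucc * (A a k.castSucc / A a (Fin.last m)) + c (Fin.last m) := by
    intro a
    rw [Fin.sum_univ_castSucc, add_div, Finset.sum_div, mul_div_assoc, div_self (hA a), mul_one]
    simp only [mul_div_assoc]
  simp only [hsplit]
  exact (tendsto_finsetSum _ fun k _ => (hlim k).const_mul _).add_const _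

theorem Filter.Tendsto.eventually_floor_eq {f : α → ℝ} {r : ℝ} (hf : Tendsto f l (𝓝 r))
    (hr : ∀ z : ℤ, r ≠ z) : ∀ᶠ a in l, ⌊f a⌋ = ⌊r⌋ := by
  have hlt : (⌊r⌋ : ℝ) < r := (Int.floor_le r).lt_of_ne (hr ⌊r⌋).symm
  filter_upwards [hf.eventually (Ioo_mem_nhds hlt (Int.lt_floor_add_one r))] with a ha
  exact Int.floor_eq_iff.mpr ⟨ha.1.le, ha.2⟩

theorem Filter.Tendsto.eventually_pos_mul_of_div {f g : α → ℝ} {r : ℝ}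
    (h : Tendsto (fun a => f a / g a) l (𝓝 r)) (hg : ∀ a, 0 < g a) (hr : r ≠ 0) :
    ∀ᶠ a in l, 0 < f a * r := by
  filter_upwards [(h.mul_const r).eventually (eventually_gt_nhds (mul_self_pos.mpr hr))]
    with a ha
  rw [div_mul_eq_mul_div] at ha
  exact (div_pos_iff_of_pos_right (hg a)).mp ha

end

theorem LinearIndependent.div_ne_intCast {ι : Type*} {L : ι → ℝ} (hL : LinearIndependent ℚ L)
    {i j : ι} (hij : i ≠ j) (z : ℤ) : L i / L j ≠ z := by
  intro h
  refine hL.notMem_span_image (s := {j}) (x := i) hij ?_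
  rw [Set.image_singleton, (div_eq_iff (hL.ne_zero j)).mp h]
  simpa only [zsmul_eq_mul] using zsmul_mem (Submodule.mem_span_singleton_self (L j)) z

theorem stmt_10_general (m : ℕ) (x : Fin m → ℝ)
    (A : ℕ → Fin (m + 1) → ℤ)
    (hpos : ∀ n, 0 < A n (Fin.last m))
    (hlim : ∀ k : Fin m, Tendsto
      (fun n => (A n k.castSucc : ℝ) / (A n (Fin.last m) : ℝ)) atTop (nhds (x k)))
    (C : Matrix (Fin (m + 1)) (Fin (m + 1)) ℤ)
    (L : Fin (m + 1) → ℝ)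
    (hL : ∀ i, L i = (∑ k : Fin m, (C i k.castSucc : ℝ) * x k) + (C i (Fin.last m) : ℝ))
    (hli : LinearIndependent ℚ L)
    (S : ℕ → Fin (m + 1) → ℤ)
    (hS : ∀ n, ∀ j : Fin (m + 1), S n j = ∑ k : Fin (m + 1), C (Fin.last m) k * A (n - (j : ℕ)) k)
    (T : ℕ → Fin m → Fin (m + 1) → ℤ)
    (hT : ∀ n, ∀ i : Fin m, ∀ j : Fin (m + 1),
      T n i j = ∑ k : Fin (m + 1), C i.castSucc k * A (n - (j : ℕ)) k) :
    ∃ N : ℕ, m ≤ N ∧ ∀ n, N ≤ n →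
      (∀ j, S n j ≠ 0) ∧
      ((∀ j, 0 < S n j) ∨ (∀ j, S n j < 0)) ∧
      (∀ i : Fin m, ∀ j : Fin (m + 1),
        ⌊(T n i j : ℝ) / (S n j : ℝ)⌋ = ⌊L i.castSucc / L (Fin.last m)⌋) := by
  set ℓ := L (Fin.last m)
  have hℓ : ℓ ≠ 0 := hli.ne_zero _
  have hD : ∀ n, (0 : ℝ) < A n (Fin.last m) := fun n => mod_cast hpos n
  have hrow : ∀ i (j : ℕ), Tendsto (fun n => (∑ k, (C i k : ℝ) * A (n - j) k) /
      A (n - j) (Fin.last m)) atTop (𝓝 (L i)) := fun i j => by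
    rw [hL i]
    exact (tendsto_sum_mul_div_last (A := fun n k => (A n k : ℝ)) (fun n => (hD n).ne') hlim
      (fun k => (C i k : ℝ))).comp (tendsto_sub_atTop_nat j)
  have hSlim : ∀ j : Fin (m + 1), Tendsto (fun n => (S n j : ℝ) / A (n - j) (Fin.last m))
      atTop (𝓝 ℓ) := fun j => by simpa only [hS, Int.cast_sum, Int.cast_mul] using hrow _ j
  have hTSlim : ∀ i j, Tendsto (fun n => (T n i j : ℝ) / S n j) atTop (𝓝 (L i.castSucc / ℓ)) :=
    fun i j => by
      have hTlim := hrow i.castSucc j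
      simp only [← Int.cast_mul, ← Int.cast_sum, ← hT] at hTlim
      exact (hTlim.div (hSlim j) hℓ).congr fun n => div_div_div_cancel_right₀ (hD _).ne' _ _
  have hev : ∀ᶠ n in atTop, ∀ j, 0 < (S n j : ℝ) * ℓ ∧
      ∀ i : Fin m, ⌊(T n i j : ℝ) / S n j⌋ = ⌊L i.castSucc / ℓ⌋ := by
    refine eventually_all.mpr fun j => ?_
    refine ((hSlim j).eventually_pos_mul_of_div (fun n => hD _) hℓ).and ?_
    exact eventually_all.mpr fun i => (hTSlim i j).eventually_floor_eq
      (hli.div_ne_intCast (Fin.castSucc_lt_last i).ne)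
  obtain ⟨N, hN⟩ := eventually_atTop.mp hev
  refine ⟨max N m, le_max_right _ _, fun n hn => ?_⟩
  obtain ⟨hSℓ, hfloor⟩ := forall_and.mp (hN n (le_of_max_le_left hn))
  refine ⟨fun j => ?_, ?_, fun i j => hfloor j i⟩
  · exact_mod_cast left_ne_zero_of_mul (hSℓ j).ne'
  · rcases hℓ.lt_or_gt with hℓneg | hℓpos
    · exact Or.inr fun j => by exact_mod_cast neg_of_mul_pos_left (hSℓ j) hℓneg.le
    · exact Or.inl fun j => by exact_mod_cast pos_of_mul_pos_left (hSℓ j) hℓpos.le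

/-- feasibility of the multidimensional Gosper algorithm, Möbius case.
With convergents `A n k` (denominators `A n (last) > 0`) converging to `x k`, an integer
matrix `C` whose rows give the linear forms `L i = ∑ C i k * x k + C i (last)`, and
`(L 0, …, L m)` linearly independent over `ℚ`, the quantities
`S n j = ∑ₖ C (last) k * A (n - j) k` and `T n i j = ∑ₖ C i k * A (n - j) k` satisfy: for all
sufficiently large `n`, the `S n j` are all nonzero of the same sign, and for each `i` the
floors `⌊T n i j / S n j⌋` agree for all `j`, with common value `⌊L i / L (last)⌋`. -/
theorem stmt_10 (m : ℕ) (hm : 1 ≤ m) (x : Fin m → ℝ)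
    (A : ℕ → Fin (m + 1) → ℤ)
    (hpos : ∀ n, 0 < A n (Fin.last m))
    (hlim : ∀ k : Fin m, Tendsto
      (fun n => (A n k.castSucc : ℝ) / (A n (Fin.last m) : ℝ)) atTop (nhds (x k)))
    (C : Matrix (Fin (m + 1)) (Fin (m + 1)) ℤ)
    (L : Fin (m + 1) → ℝ)
    (hL : ∀ i, L i = (∑ k : Fin m, (C i k.castSucc : ℝ) * x k) + (C i (Fin.last m) : ℝ))
    (hli : LinearIndependent ℚ L)
    (S : ℕ → Fin (m + 1) → ℤ)
    (hS : ∀ n, ∀ j : Fin (m + 1), S n j = ∑ k : Fin (m + 1), C (Fin.last m) k * A (n - (j : ℕ)) k)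
    (T : ℕ → Fin m → Fin (m + 1) → ℤ)
    (hT : ∀ n, ∀ i : Fin m, ∀ j : Fin (m + 1),
      T n i j = ∑ k : Fin (m + 1), C i.castSucc k * A (n - (j : ℕ)) k) :
    ∃ N : ℕ, m ≤ N ∧ ∀ n, N ≤ n →
      (∀ j, S n j ≠ 0) ∧
      ((∀ j, 0 < S n j) ∨ (∀ j, S n j < 0)) ∧
      (∀ i : Fin m, ∀ j : Fin (m + 1),
        ⌊(T n i j : ℝ) / (S n j : ℝ)⌋ = ⌊L i.castSucc / L (Fin.last m)⌋) :=
  stmt_10_general m x A hpos hlim C L hL hli S hS T hT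
end

section
/- Let m ≥ 1, let x = (x⁽¹⁾, …, x⁽ᵐ⁾) ∈ ℝᵐ, let C = [cⱼ⁽ⁱ⁾] be an (m+1)×(m+1) real matrix with associated linear forms L⁽ⁱ⁾(x, 1) = Σ_{j=1}^{m} cⱼ⁽ⁱ⁾x⁽ʲ⁾ + c_{m+1}⁽ⁱ⁾, and suppose L⁽ᵐ⁺¹⁾(x, 1) ≠ 0. Set y⁽ⁱ⁾ = L⁽ⁱ⁾(x, 1)/L⁽ᵐ⁺¹⁾(x, 1) for i ∈ {1, …, m}, let b = (b⁽¹⁾, …, b⁽ᵐ⁾) ∈ ℤᵐ with y⁽ᵐ⁾ ≠ b⁽ᵐ⁾, and let C' = P·C, where P is the (m+1)×(m+1) matrix whose first row is the standard basis vector e_{m+1} and whose (i+1)-th row is e_i − b⁽ⁱ⁾e_{m+1} for 1 ≤ i ≤ m. Then L'⁽ᵐ⁺¹⁾(x, 1) ≠ 0, L'⁽¹⁾(x, 1)/L'⁽ᵐ⁺¹⁾(x, 1) = 1/(y⁽ᵐ⁾ − b⁽ᵐ⁾), and L'⁽ⁱ⁺¹⁾(x, 1)/L'⁽ᵐ⁺¹⁾(x,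 1) = (y⁽ⁱ⁾ − b⁽ⁱ⁾)/(y⁽ᵐ⁾ − b⁽ᵐ⁾) for 1 ≤ i ≤ m−1, where L'⁽ⁱ⁾ are the linear forms with coefficient rows of C'. -/
/-!
The forms of `P * C` are the combinations of the forms of `C` given by the rows of `P`:
`L'⁽¹⁾ = L⁽ᵐ⁺¹⁾` and `L'⁽ⁱ⁺¹⁾ = L⁽ⁱ⁾ - b⁽ⁱ⁾ L⁽ᵐ⁺¹⁾ = L⁽ᵐ⁺¹⁾ (y⁽ⁱ⁾ - b⁽ⁱ⁾)`.
Every ratio then loses the common factor `L⁽ᵐ⁺¹⁾`.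
-/

/-- The linear form given by row `i` of `C` evaluated at `(x, 1)`:
`L⁽ⁱ⁾(x, 1) = ∑ⱼ C i j * x j + C i (last)`. -/
def linForm {m : ℕ} (C : Matrix (Fin (m + 1)) (Fin (m + 1)) ℝ) (x : Fin m → ℝ)
    (i : Fin (m + 1)) : ℝ :=
  (∑ j : Fin m, C i j.castSucc * x j) + C i (Fin.last m)

section LinForm

variable {n : ℕ} (P C : Matrix (Fin (n + 1)) (Fin (n + 1)) ℝ) (x : Fin n → ℝ)

lemma linForm_mul (i : Fin (n + 1)) : linForm (P * C) x i = ∑ k, P i k * linForm C x k := by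
  simp only [linForm, Matrix.mul_apply, Finset.sum_mul, mul_add, Finset.mul_sum,
    Finset.sum_add_distrib, mul_assoc]
  rw [Finset.sum_comm]

variable {P}

lemma linForm_mul_of_row_eq_single {i k : Fin (n + 1)}
    (hrow : ∀ j, P i j = if j = k then 1 else 0) :
    linForm (P * C) x i = linForm C x k := by
  simp [linForm_mul, hrow]

lemma linForm_mul_of_row_eq_single_sub_single {i k l : Fin (n + 1)} {c : ℝ}
    (hrow : ∀ j, P i j = (if j = k then 1 else 0) - (if j = l then c else 0)) :
    linForm (P * C) x i = linForm C x k - c * linForm C x l := by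
  simp [linForm_mul, hrow, sub_mul, Finset.sum_sub_distrib]

end LinForm

/-- correctness of the output step; dimension `m + 1 ≥ 1`. Suppose
`L⁽ᵐ⁺¹⁾(x,1) ≠ 0`, set `y i = L⁽ⁱ⁾(x,1) / L⁽ᵐ⁺¹⁾(x,1)`, take integers `b i` with
`y (last) ≠ b (last)`, and let `P` be the matrix whose first row is `e_(last)` and whose
`(i+1)`-st row is `e_i - b i • e_(last)`. Then the linear forms `L'` of `P * C` satisfy
`L'⁽ᵐ⁺¹⁾(x,1) ≠ 0`, `L'⁽¹⁾/L'⁽ᵐ⁺¹⁾ = 1 / (y last - b last)` and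
`L'⁽ⁱ⁺¹⁾/L'⁽ᵐ⁺¹⁾ = (y i - b i) / (y last - b last)`. -/
theorem stmt_18 (m : ℕ) (x : Fin (m + 1) → ℝ)
    (C : Matrix (Fin (m + 1 + 1)) (Fin (m + 1 + 1)) ℝ)
    (hL : linForm C x (Fin.last (m + 1)) ≠ 0)
    (y : Fin (m + 1) → ℝ)
    (hy : ∀ i : Fin (m + 1),
      y i = linForm C x i.castSucc / linForm C x (Fin.last (m + 1)))
    (b : Fin (m + 1) → ℤ)
    (hne : y (Fin.last m) ≠ (b (Fin.last m) : ℝ))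
    (P : Matrix (Fin (m + 1 + 1)) (Fin (m + 1 + 1)) ℝ)
    (hP0 : ∀ j, P 0 j = if j = Fin.last (m + 1) then 1 else 0)
    (hPi : ∀ i : Fin (m + 1), ∀ j, P i.succ j =
      (if j = i.castSucc then 1 else 0) - (if j = Fin.last (m + 1) then (b i : ℝ) else 0)) :
    linForm (P * C) x (Fin.last (m + 1)) ≠ 0 ∧
    linForm (P * C) x 0 / linForm (P * C) x (Fin.last (m + 1))
      = 1 / (y (Fin.last m) - (b (Fin.last m) : ℝ)) ∧
    ∀ i : Fin m,
      linForm (P * C) x i.succ.castSucc / linForm (P * C) x (Fin.last (m + 1))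
        = (y i.castSucc - (b i.castSucc : ℝ)) / (y (Fin.last m) - (b (Fin.last m) : ℝ)) := by
  have hrow : ∀ i : Fin (m + 1),
      linForm (P * C) x i.succ = linForm C x (Fin.last (m + 1)) * (y i - b i) := fun i => by
    rw [linForm_mul_of_row_eq_single_sub_single C x (hPi i), hy i]
    field_simp
  have hlast : linForm (P * C) x (Fin.last (m + 1))
      = linForm C x (Fin.last (m + 1)) * (y (Fin.last m) - b (Fin.last m)) :=
    hrow (Fin.last m)
  have hd : y (Fin.last m) - b (Fin.last m) ≠ 0 := sub_ne_zero.mpr hne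
  refine ⟨hlast ▸ mul_ne_zero hL hd, ?_, fun i => ?_⟩
  · rw [linForm_mul_of_row_eq_single C x hP0, hlast, div_mul_cancel_left₀ hL, one_div]
  · rw [← Fin.succ_castSucc, hrow, hlast, mul_div_mul_left _ _ hL]
end
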